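/- If u and v are convex functions on a bounded convex domain U ⊆ ℝᵐ, continuous up to the boundary, with v ≤ u in U and v = u on ∂U, then the subgradient image satisfies ∂u(U) ⊆ ∂v(U). -/

import Mathlib

/-!
`p ∈ ∂w(x)` says exactly that `x` minimizes `w - ⟪p, ·⟫` on `U`. Let `x₀ ∈ U` minimize
`u - ⟪p, ·⟫` on `U`, hence, by continuity, on `closure U`, and let `z` minimize `v - ⟪p, ·⟫` on
the compact set `closure U`. If `z ∈ U` it is the required point. Otherwise `z ∈ ∂U`, where
`v = u`, and `v ≤ u` gives `(v - ⟪p, ·⟫) x₀ ≤ (u - ⟪p, ·⟫) x₀ ≤ (u - ⟪p, ·⟫) z = (v - ⟪p, ·⟫) z`,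
so `x₀` itself minimizes `v - ⟪p, ·⟫` on `U`.
-/

open Set Metric Filter Topology

namespace Stmt5

/-- The subgradient set of `w` at `x`, relative to the set `S`. -/
def subgradientSet {m : ℕ} (S : Set (EuclideanSpace ℝ (Fin m)))
    (w : EuclideanSpace ℝ (Fin m) → ℝ) (x : EuclideanSpace ℝ (Fin m)) :
    Set (EuclideanSpace ℝ (Fin m)) :=
  {p | ∀ y ∈ S, w x + (inner ℝ p (y - x) : ℝ) ≤ w y}

/-- The gradient image `∂w(A)`. -/
def gradientImage {m : ℕ} (S : Set (EuclideanSpace ℝ (Fin m)))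
    (w : EuclideanSpace ℝ (Fin m) → ℝ) (A : Set (EuclideanSpace ℝ (Fin m))) :
    Set (EuclideanSpace ℝ (Fin m)) :=
  ⋃ x ∈ A, subgradientSet S w x

theorem mem_subgradientSet_iff_isMinOn {m : ℕ} {S : Set (EuclideanSpace ℝ (Fin m))}
    {w : EuclideanSpace ℝ (Fin m) → ℝ} {x p : EuclideanSpace ℝ (Fin m)} :
    p ∈ subgradientSet S w x ↔ IsMinOn (fun y => w y - inner ℝ p y) S x := by
  simp only [subgradientSet, mem_ofPred_eq, isMinOn_iff, inner_sub_right]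
  refine forall₂_congr fun y _ => ?_
  constructor <;> intro h <;> linarith

theorem exists_isMinOn_of_le_of_eqOn_frontier {X β : Type*} [TopologicalSpace X]
    [LinearOrder β] [TopologicalSpace β] [OrderClosedTopology β] {U : Set X} {f g : X → β}
    {x₀ : X} (hU : IsCompact (closure U)) (hf : ContinuousOn f (closure U))
    (hg : ContinuousOn g (closure U)) (hle : ∀ x ∈ U, g x ≤ f x)
    (hfr : ∀ x ∈ frontier U, g x = f x) (hx₀ : x₀ ∈ U) (hmin : IsMinOn f U x₀) :
    ∃ x ∈ U, IsMinOn g U x := by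
  obtain ⟨z, hzcl, hz⟩ := hU.exists_isMinOn ⟨x₀, subset_closure hx₀⟩ hg
  by_cases hzU : z ∈ U
  · exact ⟨z, hzU, hz.on_subset subset_closure⟩
  have hzfr : z ∈ frontier U := ⟨hzcl, fun h => hzU (interior_subset h)⟩
  refine ⟨x₀, hx₀, isMinOn_iff.2 fun y hy => ?_⟩
  calc g x₀ ≤ f x₀ := hle x₀ hx₀
    _ ≤ f z := hmin.closure hf hzcl
    _ = g z := (hfr z hzfr).symm
    _ ≤ g y := hz (subset_closure hy)

theorem gradientImage_mono_of_le_general (m : ℕ)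
    (U : Set (EuclideanSpace ℝ (Fin m)))
    (hUbd : Bornology.IsBounded U)
    (u v : EuclideanSpace ℝ (Fin m) → ℝ)
    (huc : ContinuousOn u (closure U)) (hvc : ContinuousOn v (closure U))
    (hle : ∀ x ∈ U, v x ≤ u x) (hbdry : ∀ x ∈ frontier U, v x = u x) :
    gradientImage U u U ⊆ gradientImage U v U := by
  intro p hp
  simp only [gradientImage, mem_iUnion₂, exists_prop, mem_subgradientSet_iff_isMinOn] at hp ⊢
  obtain ⟨x₀, hx₀, hmin⟩ := hp
  have hinner : ContinuousOn (fun y => inner ℝ p y) (closure U) :=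
    (continuous_const.inner continuous_id).continuousOn
  exact exists_isMinOn_of_le_of_eqOn_frontier (f := fun y => u y - inner ℝ p y)
    (g := fun y => v y - inner ℝ p y) hUbd.isCompact_closure (huc.sub hinner) (hvc.sub hinner)
    (fun x hx => sub_le_sub_right (hle x hx) _) (fun x hx => by rw [hbdry x hx]) hx₀ hmin

/-- if `u, v` are convex on a bounded convex domain `U`, continuous up
to the boundary, `v ≤ u` in `U` and `v = u` on `∂U`, then `∂u(U) ⊆ ∂v(U)`. -/
theorem gradientImage_mono_of_le (m : ℕ)
    (U : Set (EuclideanSpace ℝ (Fin m))) (hUopen : IsOpen U)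
    (hUbd : Bornology.IsBounded U) (hUconv : Convex ℝ U)
    (u v : EuclideanSpace ℝ (Fin m) → ℝ)
    (huc : ContinuousOn u (closure U)) (hvc : ContinuousOn v (closure U))
    (huconv : ConvexOn ℝ U u) (hvconv : ConvexOn ℝ U v)
    (hle : ∀ x ∈ U, v x ≤ u x) (hbdry : ∀ x ∈ frontier U, v x = u x) :
    gradientImage U u U ⊆ gradientImage U v U :=
  gradientImage_mono_of_le_general m U hUbd u v huc hvc hle hbdry

end Stmt5
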